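/- Let F be a finite field, let k < n be positive integers, and let G be a basic n×k matrix over F[s] of full column rank k, generating the code C = { G·u : u ∈ F[s]^k } of complexity δ (the maximum of the degrees of the determinants of the k×k submatrices of G). If d_j^c(C) = (n−k)(j+1) + 1 for some j ≥ 0, then j ≤ L, where L = ⌊δ/k⌋ + ⌊δ/(n−k)⌋. -/

import Mathlib

/-!
Multiplying `G` on the right by a unimodular matrix `P` does not change the code, and as long as
the matrix of top column coefficients of `G P` is rank deficient, a kernel vector of it yields
such a `P` lowering one column degree; so `G` may be assumed column reduced, with column degrees
`ν_c` summing to at most `δ`. For `a = ⌊δ/k⌋` the inputs `u` with `deg u_c ≤ a - ν_c` form a space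
of dimension at least `k(a+1) - δ`, so we can prescribe `k(a+1) - δ - 1` vanishing coefficients
among the `(a+1)n` coefficients of the codeword `G P u` of degree `≤ a` and still find it nonzero;
its weight is then at most `(n-k)(a+1) + δ + 1 ≤ (n-k)(a+b+2)` with `b = ⌊δ/(n-k)⌋`. As `G` is
basic, `G(0)` is injective, so a codeword with vanishing constant term is `s` times another one,
and dividing by `s` keeps the weight in the window `[0, j]`. For `j > a + b` this produces a
codeword with nonzero constant term of weight at most `(n-k)(j+1)`.
-/

open Polynomial

/-- The Hamming weight of a vector over a field. -/
noncomputable def hammingWt {F : Type*} [Field F] {n : ℕ} (x : Fin n → F) : ℕ :=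
  Nat.card {i : Fin n // x i ≠ 0}

/-- The `j`-th column distance of a set of polynomial vectors (a convolutional
code): the minimal sum of the Hamming weights of the first `j+1` coefficient
vectors of a codeword whose zeroth coefficient vector is nonzero. -/
noncomputable def colDist {F : Type*} [Field F] {n : ℕ}
    (C : Set (Fin n → Polynomial F)) (j : ℕ) : ℕ :=
  sInf {w | ∃ v ∈ C, (fun i => (v i).coeff 0) ≠ (0 : Fin n → F) ∧
    (∑ t ∈ Finset.range (j + 1), hammingWt (fun i => (v i).coeff t)) = w}

/-- `G` is basic: the only common divisors of the determinants of its `k × k`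
submatrices are the units, i.e. the nonzero constants. -/
def IsBasic {F : Type*} [Field F] {n k : ℕ}
    (G : Matrix (Fin n) (Fin k) (Polynomial F)) : Prop :=
  ∀ d : Polynomial F,
    (∀ r : Fin k → Fin n, StrictMono r → d ∣ (G.submatrix r id).det) → IsUnit d

open Finset Matrix

theorem Polynomial.coeff_prod_sum_of_natDegree_le {R ι : Type*} [CommSemiring R] (s : Finset ι)
    (p : ι → R[X]) (d : ι → ℕ) (h : ∀ i ∈ s, (p i).natDegree ≤ d i) :
    (∏ i ∈ s, p i).coeff (∑ i ∈ s, d i) = ∏ i ∈ s, (p i).coeff (d i) := by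
  induction s using Finset.cons_induction with
  | empty => simp
  | cons a s ha ih =>
    have hs : ∀ i ∈ s, (p i).natDegree ≤ d i := fun i hi => h i (mem_cons_of_mem hi)
    rw [prod_cons, sum_cons, coeff_mul_add_eq_of_natDegree_le (h a (mem_cons_self a s))
      ((natDegree_prod_le _ _).trans (sum_le_sum hs)), ih hs, prod_cons]

theorem exists_strictMono_linearIndependent {F V : Type*} [Field F] [AddCommGroup V] [Module F V]
    {n k : ℕ} (v : Fin n → V) (hk : Module.finrank F (Submodule.span F (Set.range v)) = k) :
    ∃ r : Fin k → Fin n, StrictMono r ∧ LinearIndependent F (v ∘ r) := by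
  subst hk
  have := FiniteDimensional.span_of_finite F (Set.finite_range v)
  obtain ⟨f, hf_mem, -, hf⟩ := Submodule.exists_fun_fin_finrank_span_eq F (Set.range v)
  choose r₀ hr₀ using hf_mem
  have hv : v ∘ r₀ = f := funext hr₀
  have hr₀_inj : Function.Injective r₀ := fun i j h => hf.injective (by rw [← hr₀, ← hr₀, h])
  set σ := Tuple.sort r₀
  refine ⟨r₀ ∘ σ, (Tuple.monotone_sort r₀).strictMono_of_injective
    (hr₀_inj.comp σ.injective), ?_⟩
  rw [← Function.comp_assoc, hv]
  exact hf.comp σ σ.injective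

namespace Matrix

theorem coeff_det_sum_of_natDegree_le {R ι : Type*} [CommRing R] [Fintype ι] [DecidableEq ι]
    (M : Matrix ι ι R[X]) (d : ι → ℕ) (h : ∀ i c, (M i c).natDegree ≤ d c) :
    M.det.coeff (∑ c, d c) = (of fun i c => (M i c).coeff (d c)).det := by
  rw [det_apply', det_apply', finsetSum_coeff]
  refine sum_congr rfl fun σ _ => ?_
  rw [← Polynomial.C_eq_intCast, coeff_C_mul,
    coeff_prod_sum_of_natDegree_le _ _ _ fun i _ => h (σ i) i]
  rfl

theorem injective_mulVec_mul {R m n : Type*} [CommRing R] [Fintype n] [DecidableEq n]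
    {A : Matrix m n R} {P : Matrix n n R} (hA : Function.Injective A.mulVec)
    (hP : IsUnit P.det) : Function.Injective (A * P).mulVec := by
  have hPinj := mulVec_injective_of_isUnit ((isUnit_iff_isUnit_det P).mpr hP)
  intro x y hxy
  exact hPinj (hA (by simpa only [mulVec_mulVec] using hxy))

theorem exists_strictMono_det_submatrix_ne_zero {F : Type*} [Field F] {n k : ℕ}
    (L : Matrix (Fin n) (Fin k) F) (hL : Function.Injective L.mulVec) :
    ∃ r : Fin k → Fin n, StrictMono r ∧ (L.submatrix r id).det ≠ 0 := by
  have hrank : Module.finrank F (Submodule.span F (Set.range L.row)) = k := by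
    rw [← rank_eq_finrank_span_row, rank, LinearMap.finrank_range_of_inj hL,
      Module.finrank_fin_fun]
  obtain ⟨r, hr, hli⟩ := exists_strictMono_linearIndependent L.row hrank
  refine ⟨r, hr, ?_⟩
  rw [← isUnit_iff_ne_zero, ← isUnit_iff_isUnit_det]
  exact linearIndependent_rows_iff_isUnit.mp hli

section ColumnDegree

variable {R m ι : Type*} [Semiring R] [Fintype m]

noncomputable def colDeg (M : Matrix m ι R[X]) (c : ι) : ℕ :=
  univ.sup fun i => (M i c).natDegree

/-- The high-order coefficient matrix of `M` (with respect to its column degrees); `M` is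
column reduced when it has full column rank. -/
noncomputable def colLeadCoeff (M : Matrix m ι R[X]) : Matrix m ι R :=
  of fun i c => (M i c).coeff (M.colDeg c)

theorem natDegree_le_colDeg (M : Matrix m ι R[X]) (i : m) (c : ι) :
    (M i c).natDegree ≤ M.colDeg c :=
  le_sup (f := fun i => (M i c).natDegree) (mem_univ i)

theorem colDeg_updateCol_ne [DecidableEq ι] (M : Matrix m ι R[X]) {c₀ c : ι} (h : c ≠ c₀)
    (w : m → R[X]) : (M.updateCol c₀ w).colDeg c = M.colDeg c := by
  simp only [colDeg, updateCol_ne h]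

theorem colDeg_updateCol_lt [DecidableEq ι] (M : Matrix m ι R[X]) (c₀ : ι) {w : m → R[X]}
    (hw : w ≠ 0) {D : ℕ} (hdeg : ∀ i, (w i).natDegree ≤ D) (hcoeff : ∀ i, (w i).coeff D = 0) :
    (M.updateCol c₀ w).colDeg c₀ < D := by
  obtain ⟨i₀, hi₀⟩ := Function.ne_iff.mp hw
  have hD : D ≠ 0 := by
    rintro rfl
    exact hi₀ (eq_C_of_natDegree_eq_zero (Nat.le_zero.mp (hdeg i₀)) ▸ by simp [hcoeff i₀])
  have hsup : (M.updateCol c₀ w).colDeg c₀ ≤ D - 1 :=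
    Finset.sup_le fun i _ => by
      simpa only [updateCol_self] using natDegree_le_pred (hdeg i) (hcoeff i)
  omega

end ColumnDegree

section ColumnReduction

variable {F m ι : Type*} [Field F] [Fintype m] [Fintype ι]

theorem natDegree_mulVec_shift_le (M : Matrix m ι F[X]) (x : ι → F) {D : ℕ}
    (hD : ∀ c, x c ≠ 0 → M.colDeg c ≤ D) (i : m) :
    ((M *ᵥ fun c => C (x c) * X ^ (D - M.colDeg c)) i).natDegree ≤ D := by
  refine natDegree_sum_le_of_forall_le _ _ fun c _ => ?_
  by_cases hc : x c = 0
  · simp [hc]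
  calc (M i c * (C (x c) * X ^ (D - M.colDeg c))).natDegree
      ≤ M.colDeg c + (D - M.colDeg c) :=
        natDegree_mul_le.trans (add_le_add (M.natDegree_le_colDeg i c)
          (natDegree_C_mul_X_pow_le _ _))
    _ = D := by have := hD c hc; omega

theorem coeff_mulVec_shift (M : Matrix m ι F[X]) (x : ι → F) {D : ℕ}
    (hD : ∀ c, x c ≠ 0 → M.colDeg c ≤ D) (i : m) :
    ((M *ᵥ fun c => C (x c) * X ^ (D - M.colDeg c)) i).coeff D =
      (M.colLeadCoeff *ᵥ x) i := by
  simp only [mulVec, dotProduct, finsetSum_coeff]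
  refine sum_congr rfl fun c _ => ?_
  by_cases hc : x c = 0
  · simp [hc]
  have := hD c hc
  rw [mul_left_comm, coeff_C_mul, coeff_mul_X_pow', if_pos (by omega),
    show D - (D - M.colDeg c) = M.colDeg c by omega, colLeadCoeff, of_apply, mul_comm]

theorem exists_isUnit_det_sum_colDeg_mul_lt [DecidableEq ι] (M : Matrix m ι F[X])
    (hM : Function.Injective M.mulVec) (hL : ¬Function.Injective M.colLeadCoeff.mulVec) :
    ∃ E : Matrix ι ι F[X], IsUnit E.det ∧ ∑ c, (M * E).colDeg c < ∑ c, M.colDeg c := by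
  classical
  obtain ⟨x, hx, hx0⟩ : ∃ x, M.colLeadCoeff *ᵥ x = 0 ∧ x ≠ 0 := by
    by_contra! h
    exact hL ((injective_iff_map_eq_zero M.colLeadCoeff.mulVecLin).mpr h)
  obtain ⟨c₀, hc₀, hmax⟩ := exists_max_image {c | x c ≠ 0} M.colDeg
    (let ⟨c, hc⟩ := Function.ne_iff.mp hx0; ⟨c, by simpa using hc⟩)
  simp only [mem_filter_univ] at hc₀ hmax
  -- Replacing column `c₀` by `∑ c, x c X ^ (colDeg c₀ - colDeg c) • (column c)` cancels its
  -- coefficient of degree `colDeg c₀`, because `x` is in the kernel of `colLeadCoeff`.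
  set μ : ι → F[X] := fun c => C (x c) * X ^ (M.colDeg c₀ - M.colDeg c)
  refine ⟨updateCol 1 c₀ μ, ?_, ?_⟩
  · rw [← cramer_apply, cramer_one]
    simpa [μ] using hc₀
  rw [mul_updateCol, Matrix.mul_one]
  have hμ : M *ᵥ μ ≠ 0 := fun h => by
    have := congrFun (hM (h.trans (mulVec_zero M).symm)) c₀
    simp [μ, hc₀] at this
  have hlt := colDeg_updateCol_lt M c₀ hμ (natDegree_mulVec_shift_le M x hmax) fun i => by
    rw [coeff_mulVec_shift M x hmax, hx, Pi.zero_apply]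
  refine sum_lt_sum (fun c _ => ?_) ⟨c₀, mem_univ _, hlt⟩
  rcases eq_or_ne c c₀ with rfl | hc
  · exact hlt.le
  · exact (colDeg_updateCol_ne M hc _).le

theorem natDegree_mulVec_le (M : Matrix m ι F[X]) {a : ℕ} {u : ι → F[X]}
    (hu : ∀ c, u c ∈ degreeLT F (a + 1 - M.colDeg c)) (i : m) :
    ((M *ᵥ u) i).natDegree ≤ a := by
  refine natDegree_sum_le_of_forall_le _ _ fun c _ => ?_
  rcases eq_or_ne (u c) 0 with hc | hc
  · simp [hc]
  have := (natDegree_lt_iff_degree_lt hc).mpr (mem_degreeLT.mp (hu c))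
  have := M.natDegree_le_colDeg i c
  exact (natDegree_mul_le (p := M i c)).trans (by omega)

theorem exists_mulVec_ne_zero_coeff_eq_zero (M : Matrix m ι F[X])
    (hM : Function.Injective M.mulVec) (a : ℕ) (Z : Finset (Fin (a + 1) × m))
    (hZ : #Z < ∑ c, (a + 1 - M.colDeg c)) :
    ∃ u, M *ᵥ u ≠ 0 ∧ (∀ i, ((M *ᵥ u) i).natDegree ≤ a) ∧
      ∀ p ∈ Z, ((M *ᵥ u) p.2).coeff p.1 = 0 := by
  let incl : (Π c, degreeLT F (a + 1 - M.colDeg c)) →ₗ[F] ι → F[X] :=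
    LinearMap.pi fun c => (degreeLT F _).subtype ∘ₗ LinearMap.proj c
  let Ψ : (Π c, degreeLT F (a + 1 - M.colDeg c)) →ₗ[F] Z → F :=
    LinearMap.pi fun p => lcoeff F p.1.1 ∘ₗ LinearMap.proj p.1.2 ∘ₗ
      (M.mulVecLin.restrictScalars F) ∘ₗ incl
  have hdim : Module.finrank F (Z → F) <
      Module.finrank F (Π c, degreeLT F (a + 1 - M.colDeg c)) := by
    rwa [Module.finrank_fintype_fun_eq_card, Fintype.card_coe, Module.finrank_pi_fintype,
      sum_congr rfl fun c _ => (degreeLTEquiv F _).finrank_eq.trans (Module.finrank_fin_fun F)]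
  obtain ⟨v, hv, hv0⟩ :=
    (Submodule.ne_bot_iff _).mp (LinearMap.ker_ne_bot_of_finrank_lt (f := Ψ) hdim)
  refine ⟨incl v, fun h => hv0 ?_, natDegree_mulVec_le M fun c => (v c).2,
    fun p hp => congrFun (LinearMap.mem_ker.mp hv) ⟨p, hp⟩⟩
  have := hM (h.trans (mulVec_zero M).symm)
  funext c
  exact Subtype.ext (congrFun this c)

end ColumnReduction

section Minors

variable {F : Type*} [Field F] {n k : ℕ}

theorem exists_strictMono_coeff_det_submatrix_ne_zero (M : Matrix (Fin n) (Fin k) F[X])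
    (hM : Function.Injective M.colLeadCoeff.mulVec) :
    ∃ r : Fin k → Fin n, StrictMono r ∧ (M.submatrix r id).det.coeff (∑ c, M.colDeg c) ≠ 0 := by
  obtain ⟨r, hr, hdet⟩ := exists_strictMono_det_submatrix_ne_zero _ hM
  refine ⟨r, hr, ?_⟩
  rw [coeff_det_sum_of_natDegree_le (M.submatrix r id) M.colDeg
    fun i c => M.natDegree_le_colDeg (r i) c]
  exact hdet

theorem sum_colDeg_mul_le_of_injective_colLeadCoeff (G : Matrix (Fin n) (Fin k) F[X])
    {P : Matrix (Fin k) (Fin k) F[X]} (hP : IsUnit P.det) {δ : ℕ}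
    (hδ : ∀ r : Fin k → Fin n, StrictMono r →
      (G.submatrix r id).det ≠ 0 → (G.submatrix r id).det.natDegree ≤ δ)
    (hL : Function.Injective (G * P).colLeadCoeff.mulVec) :
    ∑ c, (G * P).colDeg c ≤ δ := by
  obtain ⟨r, hr, hcoeff⟩ := exists_strictMono_coeff_det_submatrix_ne_zero _ hL
  rw [submatrix_mul _ _ _ id _ Function.bijective_id, submatrix_id_id, det_mul] at hcoeff
  have hGr : (G.submatrix r id).det ≠ 0 := by
    rintro h
    simp [h] at hcoeff
  calc ∑ c, (G * P).colDeg c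
      ≤ ((G.submatrix r id).det * P.det).natDegree := le_natDegree_of_ne_zero hcoeff
    _ = (G.submatrix r id).det.natDegree := by
      rw [natDegree_mul hGr hP.ne_zero, natDegree_eq_zero_of_isUnit hP, add_zero]
    _ ≤ δ := hδ r hr hGr

theorem exists_isUnit_det_sum_colDeg_mul_le (G : Matrix (Fin n) (Fin k) F[X])
    (hG : Function.Injective G.mulVec) {δ : ℕ} (hδ : ∀ r : Fin k → Fin n, StrictMono r →
      (G.submatrix r id).det ≠ 0 → (G.submatrix r id).det.natDegree ≤ δ) :
    ∃ P : Matrix (Fin k) (Fin k) F[X], IsUnit P.det ∧ ∑ c, (G * P).colDeg c ≤ δ := by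
  classical
  have hex : ∃ N, ∃ P : Matrix (Fin k) (Fin k) F[X], IsUnit P.det ∧
      ∑ c, (G * P).colDeg c = N := ⟨_, 1, by simp, rfl⟩
  obtain ⟨P, hP, hPN⟩ := Nat.find_spec hex
  refine ⟨P, hP, ?_⟩
  by_cases hL : Function.Injective (G * P).colLeadCoeff.mulVec
  · exact sum_colDeg_mul_le_of_injective_colLeadCoeff G hP hδ hL
  obtain ⟨E, hE, hlt⟩ :=
    exists_isUnit_det_sum_colDeg_mul_lt (G * P) (injective_mulVec_mul hG hP) hL
  have := Nat.find_min' hex ⟨P * E, by rw [det_mul]; exact hP.mul hE, rfl⟩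
  rw [← Matrix.mul_assoc] at this
  omega

end Minors

end Matrix

section ColumnDistance

variable {F : Type*} [Field F] {n k : ℕ}

noncomputable def truncWt (v : Fin n → F[X]) (j : ℕ) : ℕ :=
  ∑ t ∈ range (j + 1), hammingWt fun i => (v i).coeff t

theorem colDist_le_truncWt {C : Set (Fin n → F[X])} {v : Fin n → F[X]} (hv : v ∈ C)
    (h0 : (fun i => (v i).coeff 0) ≠ 0) (j : ℕ) : colDist C j ≤ truncWt v j :=
  Nat.sInf_le ⟨v, hv, h0, rfl⟩

@[simp]
theorem hammingWt_zero : hammingWt (0 : Fin n → F) = 0 := by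
  simp [hammingWt]

theorem truncWt_X_smul (v : Fin n → F[X]) (j : ℕ) :
    truncWt ((X : F[X]) • v) (j + 1) = truncWt v j := by
  simp only [truncWt, sum_range_succ' _ (j + 1), Pi.smul_apply, smul_eq_mul, coeff_X_mul,
    coeff_X_mul_zero]
  exact add_eq_left.mpr hammingWt_zero

theorem truncWt_succ_of_natDegree_le {v : Fin n → F[X]} {j : ℕ}
    (hv : ∀ i, (v i).natDegree ≤ j) : truncWt v (j + 1) = truncWt v j := by
  have : (fun i => (v i).coeff (j + 1)) = 0 :=
    funext fun i => coeff_eq_zero_of_natDegree_lt (Nat.lt_succ_of_le (hv i))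
  rw [truncWt, sum_range_succ, this, hammingWt_zero, add_zero, truncWt]

theorem truncWt_eq_of_natDegree_le {v : Fin n → F[X]} {a j : ℕ}
    (hv : ∀ i, (v i).natDegree ≤ a) (haj : a ≤ j) : truncWt v j = truncWt v a := by
  induction j, haj using Nat.le_induction with
  | base => rfl
  | succ j haj ih => rw [truncWt_succ_of_natDegree_le fun i => (hv i).trans haj, ih]

theorem truncWt_eq_card [DecidableEq F] (v : Fin n → F[X]) (a : ℕ) :
    truncWt v a = #{p : Fin (a + 1) × Fin n | (v p.2).coeff p.1 ≠ 0} := by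
  rw [truncWt, sum_range fun t => hammingWt fun i => (v i).coeff t, card_filter,
    ← univ_product_univ, sum_product]
  refine sum_congr rfl fun t _ => ?_
  rw [hammingWt, Nat.card_eq_fintype_card, Fintype.card_subtype, card_filter]

theorem truncWt_add_card_le {v : Fin n → F[X]} {a j : ℕ} (hv : ∀ i, (v i).natDegree ≤ a)
    (haj : a ≤ j) (Z : Finset (Fin (a + 1) × Fin n)) (hZ : ∀ p ∈ Z, (v p.2).coeff p.1 = 0) :
    truncWt v j + #Z ≤ (a + 1) * n := by
  classical
  have hdisj : Disjoint ({p | (v p.2).coeff p.1 ≠ 0} : Finset (Fin (a + 1) × Fin n)) Z :=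
    disjoint_left.mpr fun p hp hpZ => (mem_filter.mp hp).2 (hZ p hpZ)
  rw [truncWt_eq_of_natDegree_le hv haj, truncWt_eq_card, ← card_union_of_disjoint hdisj]
  simpa using card_le_univ (_ ∪ Z)

theorem X_dvd_of_isBasic {G : Matrix (Fin n) (Fin k) F[X]} (hG : IsBasic G)
    {u : Fin k → F[X]} (hu : ∀ i, ((G *ᵥ u) i).coeff 0 = 0) (c : Fin k) : X ∣ u c := by
  by_contra hc
  refine not_isUnit_X (hG X fun r _ => ?_)
  rw [X_dvd_iff, ← constantCoeff_apply, RingHom.map_det, ← exists_mulVec_eq_zero_iff]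
  refine ⟨constantCoeff ∘ u, fun h => hc (X_dvd_iff.mpr (congrFun h c)), funext fun i => ?_⟩
  exact (RingHom.map_mulVec constantCoeff _ u i).symm.trans (hu (r i))

theorem exists_coeff_zero_ne_zero_truncWt_le {G : Matrix (Fin n) (Fin k) F[X]} (hG : IsBasic G)
    {j N : ℕ} (hN : N ≤ j) {u : Fin k → F[X]} (hu : G *ᵥ u ≠ 0)
    (hdeg : ∀ i, ((G *ᵥ u) i).natDegree ≤ N) :
    ∃ u', (fun i => ((G *ᵥ u') i).coeff 0) ≠ 0 ∧ truncWt (G *ᵥ u') j ≤ truncWt (G *ᵥ u) j := by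
  induction N generalizing u with
  | zero =>
    refine ⟨u, fun h0 => hu (funext fun i => ?_), le_rfl⟩
    have := congrFun h0 i
    rw [Pi.zero_apply] at this
    rw [eq_C_of_natDegree_le_zero (hdeg i), this, C_0, Pi.zero_apply]
  | succ N ih =>
    by_cases h0 : (fun i => ((G *ᵥ u) i).coeff 0) ≠ 0
    · exact ⟨u, h0, le_rfl⟩
    choose w hw using X_dvd_of_isBasic hG (congrFun (not_not.mp h0))
    have hGw : G *ᵥ u = (X : F[X]) • (G *ᵥ w) := by
      rw [show u = (X : F[X]) • w from funext hw, mulVec_smul]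
    have hw0 : G *ᵥ w ≠ 0 := fun h => hu (by rw [hGw, h, smul_zero])
    have hwdeg : ∀ i, ((G *ᵥ w) i).natDegree ≤ N := fun i => by
      have := hdeg i
      rw [hGw, Pi.smul_apply, smul_eq_mul] at this
      rcases eq_or_ne ((G *ᵥ w) i) 0 with h | h
      · simp [h]
      · rw [natDegree_X_mul h] at this; omega
    obtain ⟨u', hu'0, hu'⟩ := ih (by omega) hw0 hwdeg
    refine ⟨u', hu'0, hu'.trans_eq ?_⟩
    rw [hGw, ← truncWt_X_smul, truncWt_succ_of_natDegree_le fun i => ?_]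
    exact (hGw ▸ hdeg i).trans hN

theorem exists_codeword_truncWt_add_le (G : Matrix (Fin n) (Fin k) F[X])
    (hG : Function.Injective G.mulVec) (hbasic : IsBasic G) {δ : ℕ}
    (hδ : ∀ r : Fin k → Fin n, StrictMono r →
      (G.submatrix r id).det ≠ 0 → (G.submatrix r id).det.natDegree ≤ δ)
    {a j : ℕ} (haj : a ≤ j) (hka : δ < k * (a + 1)) (hkn : k ≤ n) :
    ∃ u, (fun i => ((G *ᵥ u) i).coeff 0) ≠ 0 ∧
      truncWt (G *ᵥ u) j + k * (a + 1) ≤ (a + 1) * n + δ + 1 := by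
  obtain ⟨P, hP, hPδ⟩ := G.exists_isUnit_det_sum_colDeg_mul_le hG hδ
  obtain ⟨Z, -, hZ⟩ := exists_subset_card_eq (s := (univ : Finset (Fin (a + 1) × Fin n)))
    (n := k * (a + 1) - (δ + 1)) (by
      simpa [Nat.mul_comm (a + 1) n] using (Nat.sub_le _ _).trans (Nat.mul_le_mul_right _ hkn))
  have hcount : #Z < ∑ c, (a + 1 - (G * P).colDeg c) := by
    have : ∑ _c : Fin k, (a + 1) ≤ ∑ c, (a + 1 - (G * P).colDeg c) + ∑ c, (G * P).colDeg c := by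
      rw [← sum_add_distrib]
      exact sum_le_sum fun c _ => by omega
    simp only [sum_const, card_univ, Fintype.card_fin, smul_eq_mul] at this
    omega
  obtain ⟨w, hw0, hwdeg, hwZ⟩ :=
    (G * P).exists_mulVec_ne_zero_coeff_eq_zero (injective_mulVec_mul hG hP) a Z hcount
  rw [← mulVec_mulVec] at hw0 hwdeg hwZ
  obtain ⟨u, hu0, hu⟩ := exists_coeff_zero_ne_zero_truncWt_le hbasic haj hw0 hwdeg
  have := truncWt_add_card_le hwdeg haj Z hwZ
  exact ⟨u, hu0, by omega⟩

end ColumnDistance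

theorem colDist_max_le_L_general {F : Type*} [Field F] {n k : ℕ}
    (hk : 0 < k) (hkn : k < n)
    (G : Matrix (Fin n) (Fin k) (Polynomial F))
    (hfull : Function.Injective G.mulVec) (hbasic : IsBasic G) (δ : ℕ)
    (hδ : IsGreatest {d : ℕ | ∃ r : Fin k → Fin n, StrictMono r ∧
        (G.submatrix r id).det ≠ 0 ∧ ((G.submatrix r id).det).natDegree = d} δ)
    (j : ℕ)
    (hj : colDist {v | ∃ u : Fin k → Polynomial F, v = G.mulVec u} j =
      (n - k) * (j + 1) + 1) :
    j ≤ δ / k + δ / (n - k) := by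
  by_contra! hj_gt
  obtain ⟨u, hu0, hu⟩ := exists_codeword_truncWt_add_le G hfull hbasic
    (fun r hr h => hδ.2 ⟨r, hr, h, rfl⟩) (a := δ / k) (j := j)
    ((Nat.le_add_right _ _).trans hj_gt.le) (Nat.lt_mul_div_succ δ hk) hkn.le
  have hcol := colDist_le_truncWt (C := {v | ∃ u, v = G *ᵥ u}) ⟨u, rfl⟩ hu0 j
  rw [hj] at hcol
  have hb := Nat.lt_mul_div_succ δ (Nat.sub_pos_of_lt hkn)
  have hj' := Nat.mul_le_mul_left (n - k) (show δ / k + δ / (n - k) + 2 ≤ j + 1 by omega)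
  have hn : (n - k) * (δ / k + 1) + k * (δ / k + 1) = (δ / k + 1) * n := by
    rw [← add_mul, Nat.sub_add_cancel hkn.le, mul_comm]
  linarith

/-- If the `j`-th column distance attains its maximal value `(n-k)(j+1)+1`,
then `j ≤ L = ⌊δ/k⌋ + ⌊δ/(n-k)⌋`, where `δ` is the complexity of the code. -/
theorem colDist_max_le_L {F : Type*} [Field F] [Fintype F] {n k : ℕ}
    (hk : 0 < k) (hkn : k < n)
    (G : Matrix (Fin n) (Fin k) (Polynomial F))
    (hfull : Function.Injective G.mulVec) (hbasic : IsBasic G) (δ : ℕ)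
    (hδ : IsGreatest {d : ℕ | ∃ r : Fin k → Fin n, StrictMono r ∧
        (G.submatrix r id).det ≠ 0 ∧ ((G.submatrix r id).det).natDegree = d} δ)
    (j : ℕ)
    (hj : colDist {v | ∃ u : Fin k → Polynomial F, v = G.mulVec u} j =
      (n - k) * (j + 1) + 1) :
    j ≤ δ / k + δ / (n - k) :=
  colDist_max_le_L_general hk hkn G hfull hbasic δ hδ j hj
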